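/- arXiv:2507.23049 — 2 statements merged into one kernel-verified Lean document; each statement's English description precedes it below -/
import Mathlib

section
/- Let X₁ = X₁' + N₁ where X₁' = ∑_λ λP_λ is the diagonalizable part and N₁ = ∑_λ N_λ the nilpotent part of the Jordan decomposition, and similarly X₂. Suppose X₁ and X₂ commute. For a two-variable polynomial f, f(X₁, X₂) = ∑_{λ,μ} ∑_{q₁=0}^{m_λ−1} ∑_{q₂=0}^{m_μ−1} (∂^{q₁+q₂}f/∂z₁^{q₁}∂z₂^{q₂})(λ,μ)/(q₁! q₂!) · N_λ^{q₁} P_λ N_μ^{q₂} Q_μ, with the convention N^0 = I. -/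
/-!
Inserting `1 = ∑ P a` and `1 = ∑ Q b` gives
`X₁ ^ i * X₂ ^ j = ∑ a b, (X₁ ^ i * P a) * (X₂ ^ j * Q b)`. Writing `X₁ = (X₁ - a) + a`, the
binomial theorem expands `X₁ ^ i * P a` in powers of `X₁ - a`, and the expansion stops after
`m₁ a` terms because `(X₁ - a) ^ m₁ a * P a = 0`; since `P a` is an idempotent commuting with
`X₁`, `(X₁ - a) ^ q * P a = (N₁ a) ^ q * P a`. The coefficient `(i choose q) a ^ (i - q)` is the
Taylor coefficient `∂^q z^i / q!` at `a`.
-/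

open Finset

theorem Finset.sum_sum_comm_sum_sum {M ι κ α β : Type*} [AddCommMonoid M]
    (s : Finset ι) (t : Finset κ) (u : Finset α) (v : α → Finset β) (f : ι → κ → α → β → M) :
    ∑ i ∈ s, ∑ j ∈ t, ∑ a ∈ u, ∑ b ∈ v a, f i j a b
      = ∑ a ∈ u, ∑ b ∈ v a, ∑ i ∈ s, ∑ j ∈ t, f i j a b := by
  rw [← sum_product', sum_comm]
  refine sum_congr rfl fun a _ => ?_
  rw [sum_comm]
  exact sum_congr rfl fun b _ => sum_product' s t (f · · a b)

theorem IsIdempotentElem.mul_pow_mul_eq_pow_mul {M : Type*} [Monoid M] {y p : M}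
    (hp : IsIdempotentElem p) (hyp : Commute y p) (q : ℕ) : (y * p) ^ q * p = y ^ q * p := by
  rw [hyp.mul_pow, mul_assoc, ← pow_succ, hp.pow_succ_eq]

variable {R A : Type*} [CommRing R] [Ring A] [Algebra R A]

theorem pow_eq_sum_range_choose_smul_sub_pow (x : A) (a : R) (i : ℕ) :
    x ^ i = ∑ q ∈ range (i + 1), ((i.choose q : R) * a ^ (i - q)) • (x - a • 1) ^ q := by
  have hx : x = (x - a • 1) + algebraMap R A a := by
    rw [Algebra.algebraMap_eq_smul_one, sub_add_cancel]
  conv_lhs => rw [hx, (Algebra.commute_algebraMap_right a (x - a • 1)).add_pow]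
  refine sum_congr rfl fun q _ => ?_
  rw [← map_pow, ← map_natCast (algebraMap R A), mul_assoc, ← map_mul,
    ← Algebra.commutes, ← Algebra.smul_def, mul_comm]

theorem pow_mul_eq_sum_range_of_sub_pow_mul_eq_zero {x p : A} {a : R} {m : ℕ}
    (hm : (x - a • 1) ^ m * p = 0) (i : ℕ) :
    x ^ i * p = ∑ q ∈ range m, ((i.choose q : R) * a ^ (i - q)) • ((x - a • 1) ^ q * p) := by
  set f : ℕ → A := fun q => ((i.choose q : R) * a ^ (i - q)) • ((x - a • 1) ^ q * p)
  have hvanish : ∀ q, m ≤ q → (x - a • 1) ^ q * p = 0 := fun q hq => by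
    rw [← Nat.sub_add_cancel hq, pow_add, mul_assoc, hm, mul_zero]
  calc x ^ i * p = ∑ q ∈ range (i + 1), f q := by
        rw [pow_eq_sum_range_choose_smul_sub_pow x a i, sum_mul]
        simp only [f, smul_mul_assoc]
    _ = ∑ q ∈ range (min (i + 1) m), f q := by
        refine (sum_subset (range_subset_range.2 (min_le_left _ _)) fun q _ hq => ?_).symm
        simp only [f, hvanish q (by simp_all), smul_zero]
    _ = ∑ q ∈ range m, f q := by
        refine sum_subset (range_subset_range.2 (min_le_right _ _)) fun q hqm hq => ?_
        simp only [mem_range] at hqm hq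
        simp only [f, Nat.choose_eq_zero_of_lt (by omega : i < q), Nat.cast_zero, zero_mul,
          zero_smul]

structure IsJordanResolution (x : A) (S : Finset R) (P N : R → A) (m : R → ℕ) : Prop where
  sum_eq_one : ∑ a ∈ S, P a = 1
  isIdempotentElem : ∀ a ∈ S, IsIdempotentElem (P a)
  commute : ∀ a ∈ S, Commute x (P a)
  nilpotent_eq : ∀ a ∈ S, N a = (x - a • 1) * P a
  pow_mul_eq_zero : ∀ a ∈ S, (x - a • 1) ^ m a * P a = 0

namespace IsJordanResolution

variable {x x₁ x₂ : A} {S S₁ S₂ : Finset R} {P Q N N₁ N₂ : R → A} {m m₁ m₂ : R → ℕ}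

theorem pow_mul_eq_sum (h : IsJordanResolution x S P N m) {a : R} (ha : a ∈ S) (i : ℕ) :
    x ^ i * P a = ∑ q ∈ range (m a), ((i.choose q : R) * a ^ (i - q)) • (N a ^ q * P a) := by
  have hcomm : Commute (x - a • 1) (P a) :=
    (h.commute a ha).sub_left ((Commute.one_left _).smul_left a)
  simp only [h.nilpotent_eq a ha, (h.isIdempotentElem a ha).mul_pow_mul_eq_pow_mul hcomm]
  exact pow_mul_eq_sum_range_of_sub_pow_mul_eq_zero (h.pow_mul_eq_zero a ha) i

theorem pow_mul_pow_eq_sum (h₁ : IsJordanResolution x₁ S₁ P N₁ m₁)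
    (h₂ : IsJordanResolution x₂ S₂ Q N₂ m₂) (i j : ℕ) :
    x₁ ^ i * x₂ ^ j = ∑ a ∈ S₁, ∑ b ∈ S₂, ∑ q₁ ∈ range (m₁ a), ∑ q₂ ∈ range (m₂ b),
      ((i.choose q₁ : R) * a ^ (i - q₁) * (j.choose q₂) * b ^ (j - q₂)) •
        (N₁ a ^ q₁ * P a * N₂ b ^ q₂ * Q b) := by
  calc x₁ ^ i * x₂ ^ j = (x₁ ^ i * ∑ a ∈ S₁, P a) * (x₂ ^ j * ∑ b ∈ S₂, Q b) := by
        rw [h₁.sum_eq_one, h₂.sum_eq_one, mul_one, mul_one]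
    _ = ∑ a ∈ S₁, ∑ b ∈ S₂, (x₁ ^ i * P a) * (x₂ ^ j * Q b) := by
        rw [mul_sum, mul_sum, sum_mul_sum]
    _ = _ := sum_congr rfl fun a ha => sum_congr rfl fun b hb => by
        rw [h₁.pow_mul_eq_sum ha, h₂.pow_mul_eq_sum hb, sum_mul_sum]
        simp only [smul_mul_smul_comm, mul_assoc]

theorem sum_smul_pow_mul_pow_eq_sum (h₁ : IsJordanResolution x₁ S₁ P N₁ m₁)
    (h₂ : IsJordanResolution x₂ S₂ Q N₂ m₂) (I J : Finset ℕ) (c : ℕ → ℕ → R) :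
    ∑ i ∈ I, ∑ j ∈ J, c i j • (x₁ ^ i * x₂ ^ j)
      = ∑ a ∈ S₁, ∑ b ∈ S₂, ∑ q₁ ∈ range (m₁ a), ∑ q₂ ∈ range (m₂ b),
          (∑ i ∈ I, ∑ j ∈ J,
              c i j * (i.choose q₁) * a ^ (i - q₁) * (j.choose q₂) * b ^ (j - q₂)) •
            (N₁ a ^ q₁ * P a * N₂ b ^ q₂ * Q b) := by
  simp only [h₁.pow_mul_pow_eq_sum h₂, smul_sum, sum_smul, smul_smul, mul_assoc]
  rw [sum_sum_comm_sum_sum]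
  exact sum_congr rfl fun a _ => sum_congr rfl fun b _ => sum_sum_comm_sum_sum _ _ _ _ _

end IsJordanResolution

theorem stmt14_general (d : ℕ) (X₁ X₂ : Matrix (Fin d) (Fin d) ℂ)
    (S₁ S₂ : Finset ℂ) (P Q N₁ N₂ : ℂ → Matrix (Fin d) (Fin d) ℂ) (m₁ m₂ : ℂ → ℕ)
    (hPi : ∀ a ∈ S₁, P a * P a = P a)
    (hPs : ∑ a ∈ S₁, P a = 1)
    (hPX : ∀ a ∈ S₁, X₁ * P a = P a * X₁)
    (hN₁ : ∀ a ∈ S₁, N₁ a = (X₁ - a • 1) * P a)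
    (hm₁ : ∀ a ∈ S₁, (X₁ - a • 1) ^ m₁ a * P a = 0)
    (hQi : ∀ b ∈ S₂, Q b * Q b = Q b)
    (hQs : ∑ b ∈ S₂, Q b = 1)
    (hQX : ∀ b ∈ S₂, X₂ * Q b = Q b * X₂)
    (hN₂ : ∀ b ∈ S₂, N₂ b = (X₂ - b • 1) * Q b)
    (hm₂ : ∀ b ∈ S₂, (X₂ - b • 1) ^ m₂ b * Q b = 0)
    (D : ℕ) (c : ℕ → ℕ → ℂ) :
    ∑ i ∈ Finset.range D, ∑ j ∈ Finset.range D, c i j • (X₁ ^ i * X₂ ^ j)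
      = ∑ a ∈ S₁, ∑ b ∈ S₂,
          ∑ q₁ ∈ Finset.range (m₁ a), ∑ q₂ ∈ Finset.range (m₂ b),
            (∑ i ∈ Finset.range D, ∑ j ∈ Finset.range D,
                c i j * (i.choose q₁) * a ^ (i - q₁) * (j.choose q₂) * b ^ (j - q₂))
              • ((N₁ a) ^ q₁ * P a * (N₂ b) ^ q₂ * Q b) :=
  IsJordanResolution.sum_smul_pow_mul_pow_eq_sum ⟨hPs, hPi, hPX, hN₁, hm₁⟩
    ⟨hQs, hQi, hQX, hN₂, hm₂⟩ _ _ c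

/-- Two-variable spectral mapping theorem with nilpotent corrections: if `X₁` and `X₂` have
Jordan decompositions `X₁ = ∑ (a • P a + N₁ a)`, `X₂ = ∑ (b • Q b + N₂ b)` with
`N₁ a = (X₁ − a•1) * P a`, `N₂ b = (X₂ − b•1) * Q b` of indices `m₁ a`, `m₂ b`, and if
`X₁` commutes with `X₂` (so all spectral data of `X₁` commute with those of `X₂`), then for
the two-variable polynomial `f(z₁,z₂) = ∑_{i,j<D} c i j z₁^i z₂^j`,
`f(X₁,X₂) = ∑_{a,b} ∑_{q₁<m₁ a} ∑_{q₂<m₂ b}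
  (∂^{q₁+q₂} f/∂z₁^{q₁}∂z₂^{q₂})(a,b)/(q₁! q₂!) • (N₁ a)^{q₁} P a (N₂ b)^{q₂} Q b`
(with `N^0 = 1`). -/
theorem stmt14 (d : ℕ) (X₁ X₂ : Matrix (Fin d) (Fin d) ℂ)
    (hX : X₁ * X₂ = X₂ * X₁)
    (S₁ S₂ : Finset ℂ) (P Q N₁ N₂ : ℂ → Matrix (Fin d) (Fin d) ℂ) (m₁ m₂ : ℂ → ℕ)
    (hPi : ∀ a ∈ S₁, P a * P a = P a)
    (hPo : ∀ a ∈ S₁, ∀ a' ∈ S₁, a ≠ a' → P a * P a' = 0)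
    (hPs : ∑ a ∈ S₁, P a = 1)
    (hPX : ∀ a ∈ S₁, X₁ * P a = P a * X₁)
    (hN₁ : ∀ a ∈ S₁, N₁ a = (X₁ - a • 1) * P a)
    (hm₁ : ∀ a ∈ S₁, (X₁ - a • 1) ^ m₁ a * P a = 0)
    (hQi : ∀ b ∈ S₂, Q b * Q b = Q b)
    (hQo : ∀ b ∈ S₂, ∀ b' ∈ S₂, b ≠ b' → Q b * Q b' = 0)
    (hQs : ∑ b ∈ S₂, Q b = 1)
    (hQX : ∀ b ∈ S₂, X₂ * Q b = Q b * X₂)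
    (hN₂ : ∀ b ∈ S₂, N₂ b = (X₂ - b • 1) * Q b)
    (hm₂ : ∀ b ∈ S₂, (X₂ - b • 1) ^ m₂ b * Q b = 0)
    (hPQ : ∀ a ∈ S₁, ∀ b ∈ S₂, Commute (P a) (Q b))
    (hPX₂ : ∀ a ∈ S₁, Commute (P a) X₂)
    (hQX₁ : ∀ b ∈ S₂, Commute (Q b) X₁)
    (D : ℕ) (c : ℕ → ℕ → ℂ) :
    ∑ i ∈ Finset.range D, ∑ j ∈ Finset.range D, c i j • (X₁ ^ i * X₂ ^ j)
      = ∑ a ∈ S₁, ∑ b ∈ S₂,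
          ∑ q₁ ∈ Finset.range (m₁ a), ∑ q₂ ∈ Finset.range (m₂ b),
            (∑ i ∈ Finset.range D, ∑ j ∈ Finset.range D,
                c i j * (i.choose q₁) * a ^ (i - q₁) * (j.choose q₂) * b ^ (j - q₂))
              • ((N₁ a) ^ q₁ * P a * (N₂ b) ^ q₂ * Q b) :=
  stmt14_general d X₁ X₂ S₁ S₂ P Q N₁ N₂ m₁ m₂ hPi hPs hPX hN₁ hm₁ hQi hQs hQX hN₂ hm₂ D c
end

section
/- Let T_f, T_{β₁}, …, T_{β_ζ} be multilinear maps on matrices defined (for diagonalizable commuting-free data) by T_β(Y₁,…,Y_ζ) = ∑ β(λ₁,…,λ_{ζ+1}) P^{(1)}_{λ₁} Y₁ P^{(2)}_{λ₂} ⋯ Y_ζ P^{(ζ+1)}_{λ_{ζ+1}}, where P^{(i)}_λ are the spectral projections of diagonalizable matrices X₁,…,X_{ζ+1}. Then for ζ = 1 (double operator integrals with diagonalizable X₁, X₂) one has T_f^{X₁,X₂}(T_{β}^{X₁,X₂}(Y)) = T_{fβ'}^{X₁,X₁,X₂}(I, Y), where (fβ')(λ₁,λ₂,λ₃) = f(λ₁,λ₃)·β(λ₂,λ₃);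 that is, the composition of a DOI with a DOI is a triple operator integral whose symbol is the product of the symbols. -/
open scoped BigOperators

/-- Composition of double operator integrals (diagonalizable case): with
`X₁ = ∑ a • P a`, `X₂ = ∑ b • Q b` diagonalizable (complete orthogonal families of
idempotents `P`, `Q`), `T_f^{X₁,X₂}(Y) = ∑_{a,b} f a b • P a * Y * Q b`, the composition
`T_f^{X₁,X₂}(T_β^{X₁,X₂}(Y))` equals the triple operator integral with parameter operators
`X₁, X₁, X₂`, arguments `(1, Y)`, and symbol `(z₁,z₂,z₃) ↦ f z₁ z₃ · β z₂ z₃`. -/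
theorem stmt19 (d : ℕ) (X₁ X₂ : Matrix (Fin d) (Fin d) ℂ)
    (S₁ S₂ : Finset ℂ) (P Q : ℂ → Matrix (Fin d) (Fin d) ℂ)
    (hPi : ∀ a ∈ S₁, P a * P a = P a)
    (hPo : ∀ a ∈ S₁, ∀ a' ∈ S₁, a ≠ a' → P a * P a' = 0)
    (hPs : ∑ a ∈ S₁, P a = 1)
    (hQi : ∀ b ∈ S₂, Q b * Q b = Q b)
    (hQo : ∀ b ∈ S₂, ∀ b' ∈ S₂, b ≠ b' → Q b * Q b' = 0)
    (hQs : ∑ b ∈ S₂, Q b = 1)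
    (hX₁d : X₁ = ∑ a ∈ S₁, a • P a)
    (hX₂d : X₂ = ∑ b ∈ S₂, b • Q b)
    (f β : ℂ → ℂ → ℂ) (Y : Matrix (Fin d) (Fin d) ℂ) :
    ∑ a ∈ S₁, ∑ b ∈ S₂,
        f a b • (P a * (∑ a' ∈ S₁, ∑ b' ∈ S₂, β a' b' • (P a' * Y * Q b')) * Q b)
      = ∑ z₁ ∈ S₁, ∑ z₂ ∈ S₁, ∑ z₃ ∈ S₂,
          (f z₁ z₃ * β z₂ z₃) • (P z₁ * (1 : Matrix (Fin d) (Fin d) ℂ) * P z₂ * Y * Q z₃) := by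
  have key : ∀ a ∈ S₁, ∀ b ∈ S₂,
      f a b • (P a * (∑ a' ∈ S₁, ∑ b' ∈ S₂, β a' b' • (P a' * Y * Q b')) * Q b)
        = ∑ a' ∈ S₁, (f a b * β a' b) •
            (P a * (1 : Matrix (Fin d) (Fin d) ℂ) * P a' * Y * Q b) := by
    intro a ha b hb
    rw [Finset.mul_sum, Finset.sum_mul, Finset.smul_sum]
    refine Finset.sum_congr rfl fun a' ha' => ?_
    rw [Finset.mul_sum, Finset.sum_mul, Finset.smul_sum,
      Finset.sum_eq_single_of_mem b hb]
    · simp only [mul_smul_comm, smul_mul_assoc, smul_smul, mul_one, mul_assoc,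
        hQi b hb]
    · intro b' hb' hne
      simp [mul_smul_comm, smul_mul_assoc, mul_assoc, hQo b' hb' b hb hne]
  calc ∑ a ∈ S₁, ∑ b ∈ S₂,
        f a b • (P a * (∑ a' ∈ S₁, ∑ b' ∈ S₂, β a' b' • (P a' * Y * Q b')) * Q b)
      = ∑ a ∈ S₁, ∑ b ∈ S₂, ∑ a' ∈ S₁, (f a b * β a' b) •
          (P a * (1 : Matrix (Fin d) (Fin d) ℂ) * P a' * Y * Q b) := by
        exact Finset.sum_congr rfl fun a ha =>
          Finset.sum_congr rfl fun b hb => key a ha b hb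
    _ = _ := Finset.sum_congr rfl fun z₁ _ => Finset.sum_comm
end
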